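/- For all integers 1 ≤ d ≤ n, the base-2 logarithm of the number of functions f : {0,1}ⁿ → {0,1} with at most d relevant variables is at least d·log₂(n/d) + 2^{d−1}. -/

import Mathlib

/-!
Let `S` be a `d`-set of variables with least element `m` and `g` any boolean function of the
variables in `S \ {m}`. The relevant variables of `x ↦ (⋀_{i ∈ S} x_i) ⊕ g(x)` are exactly those
of `S`: the conjunction makes each of them relevant, whether or not `g` depends on it. Xoring the
conjunction back out recovers `g`, so these functions are `C(n,d) · 2^(2^(d-1))` distinct members
of `d`-Junta, and `C(n,d) ≥ (n/d)^d`.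
-/

/-- The variable `x_i` is relevant in the boolean function `f` if flipping the `i`-th
coordinate of some assignment changes the value of `f`. -/
def IsRelevant {n : ℕ} (f : (Fin n → Bool) → Bool) (i : Fin n) : Prop :=
  ∃ a : Fin n → Bool, f (Function.update a i false) ≠ f (Function.update a i true)

open Function

namespace Nat

theorem pow_le_choose_mul_pow {n k : ℕ} (hkn : k ≤ n) : n ^ k ≤ n.choose k * k ^ k := by
  have hfactor : ∀ i ∈ Finset.range k, (k - i) * n ≤ (n - i) * k := fun i _ => by
    rw [Nat.sub_mul, Nat.sub_mul, Nat.mul_comm k n]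
    exact Nat.sub_le_sub_left (Nat.mul_le_mul_left i hkn) _
  have key : k ! * n ^ k ≤ n.descFactorial k * k ^ k := by
    simpa only [← Nat.descFactorial_self, Nat.descFactorial_eq_prod_range, Finset.prod_mul_distrib,
      Finset.prod_const, Finset.card_range] using Finset.prod_le_prod' hfactor
  rw [Nat.descFactorial_eq_factorial_mul_choose, Nat.mul_assoc] at key
  exact Nat.le_of_mul_le_mul_left key k.factorial_pos

end Nat

section

variable {n : ℕ}

theorem IsRelevant.mem_of_dependsOn {f : (Fin n → Bool) → Bool} {s : Set (Fin n)}
    (hf : DependsOn f s) {i : Fin n} (hi : IsRelevant f i) : i ∈ s := by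
  by_contra his
  obtain ⟨a, ha⟩ := hi
  refine ha (hf fun j hj => ?_)
  have hji : j ≠ i := fun h => his (h ▸ hj)
  rw [update_of_ne hji, update_of_ne hji]

def andOn (S : Finset (Fin n)) (x : Fin n → Bool) : Bool :=
  decide (∀ i ∈ S, x i = true)

theorem andOn_eq_false {S : Finset (Fin n)} {m : Fin n} (hm : m ∈ S) {x : Fin n → Bool}
    (hx : x m = false) : andOn S x = false := by
  simpa [andOn] using ⟨m, hm, hx⟩

theorem andOn_update_true {S : Finset (Fin n)} {i : Fin n} (hi : i ∈ S) (b : Bool) :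
    andOn S (update (fun _ => true) i b) = b := by
  cases b
  · exact andOn_eq_false hi (update_self ..)
  · simp [andOn, update_apply]

theorem isRelevant_andOn_xor {S : Finset (Fin n)} {m : Fin n} (hm : m ∈ S)
    {g : (Fin n → Bool) → Bool} (hg : DependsOn g {m}ᶜ) {i : Fin n} (hi : i ∈ S) :
    IsRelevant (fun x => andOn S x ^^ g x) i := by
  -- If `g` depends on `x_i`, fix `x_m = false` to kill the conjunction; otherwise flip `x_i` at
  -- the all-true point, which flips the conjunction alone.
  by_cases hgi : IsRelevant g i
  · have him : i ≠ m := hgi.mem_of_dependsOn hg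
    obtain ⟨a, ha⟩ := hgi
    refine ⟨update a m false, fun h => ha ?_⟩
    have hand : ∀ b, andOn S (update (update a m false) i b) = false := fun b =>
      andOn_eq_false hm (by rw [update_of_ne him.symm, update_self])
    have hgm : ∀ b, g (update (update a m false) i b) = g (update a i b) := fun b =>
      hg fun j hj => by
        rw [update_comm him.symm, update_of_ne (Set.mem_compl_singleton_iff.mp hj)]
    simpa only [hand, hgm, Bool.false_xor] using h
  · have hg1 : g (update (fun _ => true) i false) = g (update (fun _ => true) i true) :=
      of_not_not (not_exists.mp hgi _)
    refine ⟨fun _ => true, ?_⟩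
    simp only [andOn_update_true hi, hg1]
    simp

theorem dependsOn_andOn (S : Finset (Fin n)) : DependsOn (andOn S) S := fun x y h => by
  simp only [andOn]
  exact decide_eq_decide.mpr (forall₂_congr fun i hi => by rw [h i hi])

def andXorJunta (S : Finset (Fin n)) (m : Fin n) (g : ((S.erase m) → Bool) → Bool) :
    (Fin n → Bool) → Bool :=
  fun x => andOn S x ^^ g ((S.erase m).restrict x)

theorem setOf_isRelevant_andXorJunta {S : Finset (Fin n)} {m : Fin n} (hm : m ∈ S)
    (g : ((S.erase m) → Bool) → Bool) : {i | IsRelevant (andXorJunta S m g) i} = S := by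
  have hg : DependsOn (fun x => g ((S.erase m).restrict x)) (S.erase m) := fun x y h =>
    congrArg g (Finset.dependsOn_restrict (π := fun _ => Bool) _ h)
  refine Set.Subset.antisymm (fun i hi => IsRelevant.mem_of_dependsOn ?_ hi) fun i hi =>
    isRelevant_andOn_xor hm (hg.mono ?_) hi
  · exact fun x y h => congr_arg₂ (· ^^ ·) (dependsOn_andOn S h)
      (hg fun i hi => h i (Finset.mem_of_mem_erase hi))
  · simp

theorem andXorJunta_injective (S : Finset (Fin n)) (m : Fin n) :
    Injective (andXorJunta S m) := fun _ _ h =>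
  Subtype.val_injective.surjective_comp_right.injective_comp_right <|
    funext fun x => Bool.xor_right_inj.mp (congrFun h x)

theorem choose_mul_two_pow_two_pow_le_card_junta {d : ℕ} (hd : 1 ≤ d) :
    n.choose d * 2 ^ 2 ^ (d - 1) ≤
      Nat.card {f : (Fin n → Bool) → Bool // Set.ncard {i | IsRelevant f i} ≤ d} := by
  classical
  let m (S : {S : Finset (Fin n) // S.card = d}) : Fin n :=
    S.1.min' (Finset.card_pos.mp (hd.trans_eq S.2.symm))
  have hm (S : {S : Finset (Fin n) // S.card = d}) : m S ∈ S.1 := S.1.min'_mem _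
  let Φ (p : Σ S : {S : Finset (Fin n) // S.card = d}, (S.1.erase (m S) → Bool) → Bool) :
      {f : (Fin n → Bool) → Bool // Set.ncard {i | IsRelevant f i} ≤ d} :=
    ⟨andXorJunta p.1.1 (m p.1) p.2, by
      rw [setOf_isRelevant_andXorJunta (hm p.1), Set.ncard_coe_finset, p.1.2]⟩
  have hΦ : Injective Φ := by
    rintro ⟨S, g⟩ ⟨S', g'⟩ h
    have hf : andXorJunta S.1 (m S) g = andXorJunta S'.1 (m S') g' := congrArg Subtype.val h
    obtain rfl : S = S' := Subtype.ext <| Finset.coe_injective <| by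
      rw [← setOf_isRelevant_andXorJunta (hm S) g, hf, setOf_isRelevant_andXorJunta (hm S') g']
    rw [andXorJunta_injective _ _ hf]
  have hcard : Nat.card (Σ S : {S : Finset (Fin n) // S.card = d},
      (S.1.erase (m S) → Bool) → Bool) = n.choose d * 2 ^ 2 ^ (d - 1) := by
    have hfibre (S : {S : Finset (Fin n) // S.card = d}) :
        Nat.card ((S.1.erase (m S) → Bool) → Bool) = 2 ^ 2 ^ (d - 1) := by
      rw [Nat.card_fun, Nat.card_fun, Nat.card_eq_finsetCard, Finset.card_erase_of_mem (hm S), S.2,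
        Nat.card_eq_fintype_card, Fintype.card_bool]
    rw [Nat.card_sigma, Finset.sum_congr rfl fun S _ => hfibre S, Finset.sum_const, Finset.card_univ,
      Fintype.card_finset_len, Fintype.card_fin, smul_eq_mul]
  exact hcard ▸ Nat.card_le_card_of_injective Φ hΦ

end

/-- For all integers `1 ≤ d ≤ n`, the base-2 logarithm of the number of
functions `f : {0,1}ⁿ → {0,1}` with at most `d` relevant variables is at least
`d·log₂(n/d) + 2^{d−1}`. -/
theorem stmt_9 (n d : ℕ) (hd : 1 ≤ d) (hdn : d ≤ n) :
    (d : ℝ) * Real.logb 2 ((n : ℝ) / (d : ℝ)) + 2 ^ (d - 1) ≤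
      Real.logb 2
        (Nat.card {f : (Fin n → Bool) → Bool // Set.ncard {i | IsRelevant f i} ≤ d}) := by
  have hd0 : (0 : ℝ) < d := by exact_mod_cast hd
  have hn0 : (0 : ℝ) < n := by exact_mod_cast hd.trans hdn
  have hchoose : ((n : ℝ) / d) ^ d ≤ n.choose d := by
    rw [div_pow, div_le_iff₀ (by positivity)]
    exact_mod_cast Nat.pow_le_choose_mul_pow hdn
  have hcard : (n.choose d : ℝ) * 2 ^ 2 ^ (d - 1) ≤
      Nat.card {f : (Fin n → Bool) → Bool // Set.ncard {i | IsRelevant f i} ≤ d} := by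
    exact_mod_cast choose_mul_two_pow_two_pow_le_card_junta hd
  calc (d : ℝ) * Real.logb 2 (n / d) + 2 ^ (d - 1)
      = Real.logb 2 ((n / d) ^ d * 2 ^ 2 ^ (d - 1)) := by
        rw [Real.logb_mul (by positivity) (by positivity), Real.logb_pow, Real.logb_pow,
          Real.logb_self_eq_one one_lt_two, mul_one]
        push_cast; ring
    _ ≤ Real.logb 2 (n.choose d * 2 ^ 2 ^ (d - 1)) :=
        Real.logb_le_logb_of_le one_lt_two (by positivity) (by gcongr)
    _ ≤ _ := Real.logb_le_logb_of_le one_lt_two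
        (by have := Nat.choose_pos hdn; positivity) hcard
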